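/- For every pair of integers n, j with n ≥ 2 and 1 ≤ j ≤ n−1, the binomial coefficient satisfies (1/(√(2π)·e^{1/6}))·(1/(√n·γ(j/n)))·varphi(j/n)^n ≤ C(n,j) ≤ (e^{1/12}/√(2π))·(1/(√n·γ(j/n)))·varphi(j/n)^n. -/

import Mathlib

/-!
Write `C(n, j) = n! / (j! (n-j)!)` and sandwich each factorial `m!` between
`s m = √(2πm) (m/e)^m` and `s m · e^{1/(12m)} ≤ s m · e^{1/12}`.
The upper bound follows from Robbins' estimate
`log σ m - log σ (m+1) ≤ 1/(12m(m+1))` on the Stirling sequence `σ m = m! / (√(2m) (m/e)^m)`: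
it makes `log σ m - 1/(12m)` increasing, hence bounded by its limit `log √π`.
The ratio `s n / (s j · s (n-j))` is exactly `φ(j/n)^n / (√(2πn) γ(j/n))`.
-/

noncomputable def varphi (x : ℝ) : ℝ := x ^ (-x) * (1 - x) ^ (-(1 - x))

noncomputable def gam (x : ℝ) : ℝ := Real.sqrt (x - x ^ 2)

open Filter Real Nat Stirling
open scoped Topology

theorem stirlingSeq_le_sqrt_pi_mul_exp {n : ℕ} (hn : n ≠ 0) :
    stirlingSeq n ≤ √π * exp (1 / (12 * n)) := by
  obtain ⟨m, rfl⟩ := Nat.exists_eq_add_one_of_ne_zero hn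
  set f : ℕ → ℝ := fun m ↦ log (stirlingSeq (m + 1)) - 1 / (12 * (m + 1 : ℕ))
  have hf_mono : Monotone f := monotone_nat_of_le_succ fun m ↦ by
    have hstep := log_stirlingSeq_sdiff_le (m + 1)
    simp only [f]
    have htel : (1 : ℝ) / (12 * (m + 1 : ℕ) * ((m + 1 : ℕ) + 1)) =
        1 / (12 * (m + 1 : ℕ)) - 1 / (12 * (m + 1 + 1 : ℕ)) := by
      push_cast; field_simp; ring
    linarith
  have hf_lim : Tendsto f atTop (𝓝 (log √π - 0)) := by
    refine Tendsto.sub ?_ ?_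
    · exact ((continuousAt_log (by positivity)).tendsto).comp
        (tendsto_stirlingSeq_sqrt_pi.comp (tendsto_add_atTop_nat 1))
    · exact tendsto_const_nhds.div_atTop <| (tendsto_natCast_atTop_atTop.comp
        (tendsto_add_atTop_nat 1)).const_mul_atTop (by norm_num)
  have hf_le : f m ≤ log √π - 0 := hf_mono.ge_of_tendsto hf_lim m
  rw [← exp_log (stirlingSeq'_pos m), ← exp_log (show 0 < √π by positivity), ← exp_add]
  exact exp_le_exp.mpr (by simp only [f] at hf_le; linarith)

noncomputable def stirlingApprox (n : ℕ) : ℝ := √(2 * π * n) * (n / exp 1) ^ n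

theorem stirlingApprox_pos {n : ℕ} (hn : n ≠ 0) : 0 < stirlingApprox n := by
  have : (0 : ℝ) < n := by positivity
  unfold stirlingApprox; positivity

theorem factorial_le_stirlingApprox_mul_exp {n : ℕ} (hn : n ≠ 0) :
    (n ! : ℝ) ≤ stirlingApprox n * exp (1 / (12 * n)) := by
  have hs : stirlingApprox n = √π * (√(2 * n) * (n / exp 1) ^ n) := by
    simp [stirlingApprox, sqrt_mul']; ring
  have hd : 0 < √(2 * n) * (n / exp 1) ^ n := by
    have : (0 : ℝ) < n := by positivity
    positivity
  rw [hs, mul_right_comm, ← div_le_iff₀ hd]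
  exact stirlingSeq_le_sqrt_pi_mul_exp hn

theorem factorial_le_stirlingApprox_mul_exp_one_div_twelve {n : ℕ} (hn : n ≠ 0) :
    (n ! : ℝ) ≤ stirlingApprox n * exp (1 / 12) := by
  refine (factorial_le_stirlingApprox_mul_exp hn).trans ?_
  gcongr
  · exact (stirlingApprox_pos hn).le
  · have : (1 : ℝ) ≤ n := by exact_mod_cast Nat.one_le_iff_ne_zero.mpr hn
    linarith

theorem rpow_neg_self_pow {x : ℝ} (hx : 0 < x) {N m : ℕ} (hm : x * N = m) :
    (x ^ (-x)) ^ N = (x ^ m)⁻¹ := by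
  rw [← rpow_natCast, ← rpow_mul hx.le, neg_mul, hm, rpow_neg hx.le, rpow_natCast]

theorem varphi_div_add_pow {j k : ℕ} (hj : j ≠ 0) (hk : k ≠ 0) :
    varphi (j / (j + k)) ^ (j + k) = ((j : ℝ) + k) ^ (j + k) / ((j : ℝ) ^ j * (k : ℝ) ^ k) := by
  have hn : (j : ℝ) + k ≠ 0 := by positivity
  have h1 : 1 - (j : ℝ) / (j + k) = k / (j + k) := by field_simp; ring
  rw [varphi, h1, mul_pow, rpow_neg_self_pow (by positivity) (m := j) (by push_cast; field_simp),
    rpow_neg_self_pow (by positivity) (m := k) (by push_cast; field_simp), div_pow, div_pow,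
    pow_add]
  field_simp

theorem gam_div_add {a b : ℝ} (hab : 0 < a + b) :
    gam (a / (a + b)) = √(a * b) / (a + b) := by
  rw [gam, show a / (a + b) - (a / (a + b)) ^ 2 = a * b / (a + b) ^ 2 by field_simp; ring,
    sqrt_div' _ (by positivity), sqrt_sq hab.le]

theorem stirlingApprox_add_div_mul {j k : ℕ} (hj : j ≠ 0) (hk : k ≠ 0) :
    stirlingApprox (j + k) / (stirlingApprox j * stirlingApprox k) =
      1 / √(2 * π) * (1 / (√((j : ℝ) + k) * gam (j / (j + k)))) *
        varphi (j / (j + k)) ^ (j + k) := by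
  have hj0 : (0 : ℝ) < j := by positivity
  have hk0 : (0 : ℝ) < k := by positivity
  rw [varphi_div_add_pow hj hk, gam_div_add (by positivity)]
  simp only [stirlingApprox, div_pow, pow_add]
  push_cast
  rw [sqrt_mul' _ hj0.le, sqrt_mul' _ hk0.le, sqrt_mul' _ (by positivity), sqrt_mul' _ hk0.le]
  field_simp
  exact sq_sqrt (by positivity)

theorem stirlingApprox_add_div_mul_div_exp_le_choose {j k : ℕ} (hj : j ≠ 0) (hk : k ≠ 0) :
    stirlingApprox (j + k) / (stirlingApprox j * stirlingApprox k) / exp (1 / 6) ≤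
      (j + k).choose j := by
  have hexp : exp (1 / 6) = exp (1 / 12) * exp (1 / 12) := by rw [← exp_add]; norm_num
  rw [cast_add_choose, div_div, hexp, mul_mul_mul_comm]
  refine div_le_div₀ (by positivity) (le_factorial_stirling _) (by positivity) ?_
  exact mul_le_mul (factorial_le_stirlingApprox_mul_exp_one_div_twelve hj)
    (factorial_le_stirlingApprox_mul_exp_one_div_twelve hk) (by positivity)
    (mul_pos (stirlingApprox_pos hj) (exp_pos _)).le

theorem choose_le_exp_mul_stirlingApprox_add_div_mul {j k : ℕ} (hj : j ≠ 0) (hk : k ≠ 0) :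
    ((j + k).choose j : ℝ) ≤
      exp (1 / 12) * (stirlingApprox (j + k) / (stirlingApprox j * stirlingApprox k)) := by
  rw [cast_add_choose, ← mul_div_assoc, mul_comm (exp _)]
  refine div_le_div₀ (mul_pos (stirlingApprox_pos (by omega)) (exp_pos _)).le
    (factorial_le_stirlingApprox_mul_exp_one_div_twelve (by omega))
    (mul_pos (stirlingApprox_pos hj) (stirlingApprox_pos hk)) ?_
  exact mul_le_mul (le_factorial_stirling j) (le_factorial_stirling k)
    (stirlingApprox_pos hk).le (by positivity)

theorem stmt_5 (n j : ℕ) (hj1 : 1 ≤ j) (hj2 : j ≤ n - 1) :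
    (1 / (Real.sqrt (2 * Real.pi) * Real.exp (1 / 6))) *
        (1 / (Real.sqrt n * gam ((j : ℝ) / n))) * varphi ((j : ℝ) / n) ^ n ≤
      (Nat.choose n j : ℝ) ∧
    (Nat.choose n j : ℝ) ≤
      (Real.exp (1 / 12) / Real.sqrt (2 * Real.pi)) *
        (1 / (Real.sqrt n * gam ((j : ℝ) / n))) * varphi ((j : ℝ) / n) ^ n := by
  obtain ⟨k, rfl⟩ : ∃ k, n = j + k := ⟨n - j, by omega⟩
  have hj : j ≠ 0 := by omega
  have hk : k ≠ 0 := by omega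
  have hratio := stirlingApprox_add_div_mul hj hk
  push_cast
  constructor
  · calc _ = stirlingApprox (j + k) / (stirlingApprox j * stirlingApprox k) / exp (1 / 6) := by
          rw [hratio]; ring
      _ ≤ _ := stirlingApprox_add_div_mul_div_exp_le_choose hj hk
  · calc _ ≤ exp (1 / 12) * (stirlingApprox (j + k) / (stirlingApprox j * stirlingApprox k)) :=
          choose_le_exp_mul_stirlingApprox_add_div_mul hj hk
      _ = _ := by rw [hratio]; ring
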